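/- Under the MDP regularity assumptions and the nearest neighbor kernel assumptions, the joint Bellman–NN operator G has a unique fixed point q_h* : {1,…,n}×A → ℝ (i.e., Gq_h* = q_h*), and this fixed point satisfies max_{i,a} |q_h*(i,a)| ≤ V_max. -/

import Mathlib

/-!
The greedy nearest-neighbour value `y ↦ max_b (Γ_NN q)(y, b)` is `1`-Lipschitz in `q` for the sup
norm, because each `K y ·` is a probability vector and `max` over a finite set is `1`-Lipschitz.
Integrating against the probability density `p(· | c_i, a)` does not increase sup norms, so `G` is
a `γ`-contraction of `{1,…,n} × A → ℝ` and Banach's theorem gives the unique fixed point `q*`.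
The a priori estimate `‖q*‖ ≤ ‖G 0‖ / (1 - γ)` with `G 0 = r(c_·, ·)` yields `‖q*‖ ≤ V_max`.
-/

open MeasureTheory

section Averaging

variable {ι A : Type*}

lemma abs_sum_mul_le_of_abs_le [Fintype ι] {w x : ι → ℝ} {D : ℝ} (hw : ∀ j, 0 ≤ w j)
    (hw1 : ∑ j, w j = 1) (hx : ∀ j, |x j| ≤ D) : |∑ j, w j * x j| ≤ D :=
  calc |∑ j, w j * x j| ≤ ∑ j, w j * D := by
        refine (Finset.abs_sum_le_sum_abs _ _).trans (Finset.sum_le_sum fun j _ => ?_)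
        rw [abs_mul, abs_of_nonneg (hw j)]
        exact mul_le_mul_of_nonneg_left (hx j) (hw j)
    _ = D := by rw [← Finset.sum_mul, hw1, one_mul]

lemma abs_ciSup_sub_ciSup_le [Finite A] [Nonempty A] {f g : A → ℝ} {D : ℝ}
    (h : ∀ b, |f b - g b| ≤ D) : |(⨆ b, f b) - ⨆ b, g b| ≤ D := by
  have sup_le_sup_add : ∀ {f g : A → ℝ}, (∀ b, f b - g b ≤ D) → ⨆ b, f b ≤ (⨆ b, g b) + D :=
    fun {_ g} hfg => ciSup_le fun b => by linarith [hfg b, Finite.le_ciSup g b]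
  rw [abs_sub_le_iff]
  constructor
  · linarith [sup_le_sup_add fun b => (abs_le.1 (h b)).2]
  · linarith [sup_le_sup_add (f := g) (g := f) fun b => by linarith [abs_le.1 (h b)]]

variable {E : Type*} [MeasurableSpace E] {μ : Measure E} {w f : E → ℝ} {M : ℝ}

lemma integrable_mul_of_integral_eq_one (hw1 : ∫ y, w y ∂μ = 1)
    (hf : AEStronglyMeasurable f μ) (hfM : ∀ y, |f y| ≤ M) :
    Integrable (fun y => w y * f y) μ :=
  (Integrable.of_integral_ne_zero (f := w) (by rw [hw1]; exact one_ne_zero)).mul_bdd hf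
    (ae_of_all _ hfM)

lemma abs_integral_mul_le_of_abs_le (hw0 : ∀ᵐ y ∂μ, 0 ≤ w y) (hw1 : ∫ y, w y ∂μ = 1)
    (hfM : ∀ y, |f y| ≤ M) : |∫ y, w y * f y ∂μ| ≤ M :=
  calc |∫ y, w y * f y ∂μ| ≤ ∫ y, M * w y ∂μ := by
        have hw : Integrable w μ := .of_integral_ne_zero (by rw [hw1]; exact one_ne_zero)
        rw [← Real.norm_eq_abs]
        refine norm_integral_le_of_norm_le (hw.const_mul M) ?_
        filter_upwards [hw0] with y hy
        rw [Real.norm_eq_abs, abs_mul, abs_of_nonneg hy, mul_comm]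
        exact mul_le_mul_of_nonneg_right (hfM y) hy
    _ = M := by rw [integral_const_mul, hw1, mul_one]

end Averaging

lemma ContractingWith.norm_fixedPoint_le {V : Type*} [NormedAddCommGroup V] [CompleteSpace V]
    {K : NNReal} {f : V → V} (hf : ContractingWith K f) :
    ‖ContractingWith.fixedPoint f hf‖ ≤ ‖f 0‖ / (1 - K) := by
  simpa [dist_zero_left] using hf.dist_fixedPoint_le 0

section BellmanNN

variable {E ι A : Type*} [Fintype ι]

def nnOperator (K : E → ι → ℝ) (q : ι → A → ℝ) (y : E) (b : A) : ℝ :=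
  ∑ j, K y j * q j b

/-- The joint Bellman–NN operator `G`, with `R i a = r(c_i, a)` and `P i a y = p(y | c_i, a)`. -/
noncomputable def bellmanNN [MeasurableSpace E] (μ : Measure E) (γ : ℝ) (R : ι → A → ℝ)
    (P : ι → A → E → ℝ) (K : E → ι → ℝ) (q : ι → A → ℝ) : ι → A → ℝ :=
  fun i a => R i a + γ * ∫ y, P i a y * ⨆ b, nnOperator K q y b ∂μ

variable {K : E → ι → ℝ}

lemma abs_iSup_nnOperator_sub_le [Fintype A] [Nonempty A] (hK_nonneg : ∀ y j, 0 ≤ K y j)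
    (hK_sum : ∀ y, ∑ j, K y j = 1) (q q' : ι → A → ℝ) (y : E) :
    |(⨆ b, nnOperator K q y b) - ⨆ b, nnOperator K q' y b| ≤ dist q q' := by
  refine abs_ciSup_sub_ciSup_le fun b => ?_
  have hdiff : nnOperator K q y b - nnOperator K q' y b = ∑ j, K y j * (q j b - q' j b) := by
    simp only [nnOperator, mul_sub, Finset.sum_sub_distrib]
  rw [hdiff]
  refine abs_sum_mul_le_of_abs_le (hK_nonneg y) (hK_sum y) fun j => ?_
  rw [← Real.dist_eq]
  exact (dist_le_pi_dist (q j) (q' j) b).trans (dist_le_pi_dist q q' j)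

lemma abs_iSup_nnOperator_le [Fintype A] [Nonempty A] (hK_nonneg : ∀ y j, 0 ≤ K y j)
    (hK_sum : ∀ y, ∑ j, K y j = 1) (q : ι → A → ℝ) (y : E) : |⨆ b, nnOperator K q y b| ≤ ‖q‖ := by
  simpa [nnOperator, dist_zero_right] using abs_iSup_nnOperator_sub_le hK_nonneg hK_sum q 0 y

lemma measurable_iSup_nnOperator [MeasurableSpace E] [Countable A]
    (hK_meas : ∀ j, Measurable fun y => K y j) (q : ι → A → ℝ) :
    Measurable fun y => ⨆ b, nnOperator K q y b :=
  Measurable.iSup fun _ => Finset.measurable_sum _ fun j _ => (hK_meas j).mul_const _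

variable [MeasurableSpace E] {μ : Measure E} {γ : ℝ} {R : ι → A → ℝ} {P : ι → A → E → ℝ}

lemma bellmanNN_zero : bellmanNN μ γ R P K 0 = R := by
  ext i a
  simp [bellmanNN, nnOperator]

lemma dist_bellmanNN_le [Fintype A] [Nonempty A] (hγ : 0 ≤ γ)
    (hP_nonneg : ∀ i a, ∀ᵐ y ∂μ, 0 ≤ P i a y) (hP_int : ∀ i a, ∫ y, P i a y ∂μ = 1)
    (hK_meas : ∀ j, Measurable fun y => K y j) (hK_nonneg : ∀ y j, 0 ≤ K y j)
    (hK_sum : ∀ y, ∑ j, K y j = 1) (q q' : ι → A → ℝ) :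
    dist (bellmanNN μ γ R P K q) (bellmanNN μ γ R P K q') ≤ γ * dist q q' := by
  have hD : 0 ≤ γ * dist q q' := mul_nonneg hγ dist_nonneg
  refine (dist_pi_le_iff hD).2 fun i => (dist_pi_le_iff hD).2 fun a => ?_
  have hint : ∀ q : ι → A → ℝ, Integrable (fun y => P i a y * ⨆ b, nnOperator K q y b) μ :=
    fun q => integrable_mul_of_integral_eq_one (hP_int i a)
      (measurable_iSup_nnOperator hK_meas q).aestronglyMeasurable
      (abs_iSup_nnOperator_le hK_nonneg hK_sum q)
  calc dist (bellmanNN μ γ R P K q i a) (bellmanNN μ γ R P K q' i a)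
      = γ * |∫ y, P i a y * ((⨆ b, nnOperator K q y b) - ⨆ b, nnOperator K q' y b) ∂μ| := by
        simp only [bellmanNN, Real.dist_eq, mul_sub, integral_sub (hint q) (hint q')]
        rw [add_sub_add_left_eq_sub, ← mul_sub, abs_mul, abs_of_nonneg hγ]
    _ ≤ γ * dist q q' := mul_le_mul_of_nonneg_left (abs_integral_mul_le_of_abs_le
        (hP_nonneg i a) (hP_int i a) (abs_iSup_nnOperator_sub_le hK_nonneg hK_sum q q')) hγ

end BellmanNN

theorem joint_bellman_nn_operator_fixed_point_general
    (d : ℕ) (X : Set (EuclideanSpace ℝ (Fin d)))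
    (hXcomp : IsCompact X)
    (A : Type*) [Fintype A] [Nonempty A]
    (γ β Rmax Vmax : ℝ)
    (hγ : γ ∈ Set.Ioo (0:ℝ) 1) (hβ : β = 1 / (1 - γ)) (hVmax : Vmax = β * Rmax)
    (r : EuclideanSpace ℝ (Fin d) → A → ℝ)
    (hr_nonneg : ∀ x ∈ X, ∀ a : A, 0 ≤ r x a)
    (hr_bdd : ∀ x ∈ X, ∀ a : A, r x a ≤ Rmax)
    (p : EuclideanSpace ℝ (Fin d) → EuclideanSpace ℝ (Fin d) → A → ℝ)
    (hp_nonneg : ∀ y ∈ X, ∀ x ∈ X, ∀ a : A, 0 ≤ p y x a)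
    (hp_int : ∀ x ∈ X, ∀ a : A, ∫ y in X, p y x a = 1)
    (n : ℕ)
    (c : Fin n → EuclideanSpace ℝ (Fin d)) (hc : ∀ i, c i ∈ X)
    (K : EuclideanSpace ℝ (Fin d) → Fin n → ℝ)
    (hK_meas : ∀ i, Measurable fun x => K x i)
    (hK_nonneg : ∀ x i, 0 ≤ K x i)
    (hK_sum : ∀ x, ∑ i, K x i = 1) :
    ∃ qstar : Fin n → A → ℝ,
      (∀ (i : Fin n) (a : A),
        qstar i a =
          r (c i) a + γ * ∫ y in X, p y (c i) a * ⨆ b : A, ∑ j, K y j * qstar j b) ∧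
      (∀ (i : Fin n) (a : A), |qstar i a| ≤ Vmax) ∧
      (∀ q' : Fin n → A → ℝ,
        (∀ (i : Fin n) (a : A),
          q' i a =
            r (c i) a + γ * ∫ y in X, p y (c i) a * ⨆ b : A, ∑ j, K y j * q' j b) →
        q' = qstar) := by
  obtain ⟨hγ0, hγ1⟩ := hγ
  set G := bellmanNN (volume.restrict X) γ (fun i a => r (c i) a) (fun i a y => p y (c i) a) K
  have hP_nonneg : ∀ i a, ∀ᵐ y ∂volume.restrict X, 0 ≤ p y (c i) a := fun i a =>
    ae_restrict_of_forall_mem hXcomp.isClosed.measurableSet fun y hy => hp_nonneg y hy _ (hc i) a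
  have hG : ContractingWith ⟨γ, hγ0.le⟩ G :=
    ⟨hγ1, LipschitzWith.of_dist_le_mul <| dist_bellmanNN_le hγ0.le hP_nonneg
      (fun i => hp_int _ (hc i)) hK_meas hK_nonneg hK_sum⟩
  set qstar := hG.fixedPoint G
  have hfix : G qstar = qstar := hG.fixedPoint_isFixedPt
  refine ⟨qstar, fun i a => congrFun₂ hfix.symm i a, fun i a => ?_,
    fun q' hq' => hG.fixedPoint_unique (funext₂ fun i a => (hq' i a).symm)⟩
  have hRmax : 0 ≤ Rmax := (hr_nonneg _ (hc i) a).trans (hr_bdd _ (hc i) a)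
  have hG0 : ‖G 0‖ ≤ Rmax := by
    rw [show G 0 = _ from bellmanNN_zero, pi_norm_le_iff_of_nonneg hRmax]
    refine fun j => (pi_norm_le_iff_of_nonneg hRmax).2 fun b => ?_
    rw [Real.norm_eq_abs, abs_of_nonneg (hr_nonneg _ (hc j) b)]
    exact hr_bdd _ (hc j) b
  calc |qstar i a| ≤ ‖qstar‖ := (norm_le_pi_norm (qstar i) a).trans (norm_le_pi_norm qstar i)
    _ ≤ Rmax / (1 - γ) :=
        hG.norm_fixedPoint_le.trans (div_le_div_of_nonneg_right hG0 (sub_nonneg.2 hγ1.le))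
    _ = Vmax := by rw [hVmax, hβ, one_div_mul_eq_div]

/-- The joint Bellman–nearest-neighbor operator `G` has a unique fixed point
`q_h*`, and this fixed point is bounded by `V_max`. -/
theorem joint_bellman_nn_operator_fixed_point
    (d : ℕ) (X : Set (EuclideanSpace ℝ (Fin d)))
    (hXne : X.Nonempty) (hXcomp : IsCompact X)
    (A : Type*) [Fintype A] [Nonempty A]
    (γ β Rmax Vmax : ℝ)
    (hγ : γ ∈ Set.Ioo (0:ℝ) 1) (hβ : β = 1 / (1 - γ)) (hVmax : Vmax = β * Rmax)
    (r : EuclideanSpace ℝ (Fin d) → A → ℝ)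
    (hr_meas : ∀ a, Measurable fun x => r x a)
    (hr_nonneg : ∀ x ∈ X, ∀ a : A, 0 ≤ r x a)
    (hr_bdd : ∀ x ∈ X, ∀ a : A, r x a ≤ Rmax)
    (p : EuclideanSpace ℝ (Fin d) → EuclideanSpace ℝ (Fin d) → A → ℝ)
    (hp_meas : ∀ x ∈ X, ∀ a : A, Measurable fun y => p y x a)
    (hp_nonneg : ∀ y ∈ X, ∀ x ∈ X, ∀ a : A, 0 ≤ p y x a)
    (hp_int : ∀ x ∈ X, ∀ a : A, ∫ y in X, p y x a = 1)
    (n : ℕ) (hn : 0 < n)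
    (c : Fin n → EuclideanSpace ℝ (Fin d)) (hc : ∀ i, c i ∈ X)
    (K : EuclideanSpace ℝ (Fin d) → Fin n → ℝ)
    (hK_meas : ∀ i, Measurable fun x => K x i)
    (hK_nonneg : ∀ x i, 0 ≤ K x i)
    (hK_sum : ∀ x, ∑ i, K x i = 1) :
    ∃ qstar : Fin n → A → ℝ,
      (∀ (i : Fin n) (a : A),
        qstar i a =
          r (c i) a + γ * ∫ y in X, p y (c i) a * ⨆ b : A, ∑ j, K y j * qstar j b) ∧
      (∀ (i : Fin n) (a : A), |qstar i a| ≤ Vmax) ∧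
      (∀ q' : Fin n → A → ℝ,
        (∀ (i : Fin n) (a : A),
          q' i a =
            r (c i) a + γ * ∫ y in X, p y (c i) a * ⨆ b : A, ∑ j, K y j * q' j b) →
        q' = qstar) :=
  joint_bellman_nn_operator_fixed_point_general d X hXcomp A γ β Rmax Vmax hγ hβ hVmax r hr_nonneg
    hr_bdd p hp_nonneg hp_int n c hc K hK_meas hK_nonneg hK_sum
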